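/- arXiv:2408.15806 — 2 statements merged into one kernel-verified Lean document; each statement's English description precedes it below -/
import Mathlib

section
/- For any real α ∈ [0,1), real θ > -α (with θ > 0 if α = 0), and positive integer n, the sum ∑_{i=1}^n C(n,i) · (1-α)_{i-1} · (θ+α)_{n-i} equals (θ+1)_{n-1} · ∑_{i=1}^n (θ+α)_{i-1}/(θ+1)_{i-1}. -/
open Finset Real Filter

noncomputable def rf (x : ℝ) (m : ℕ) : ℝ := (ascPochhammer ℝ m).eval x

lemma rf_zero (x : ℝ) : rf x 0 = 1 := by simp [rf]
lemma rf_succ (x : ℝ) (m : ℕ) : rf x (m+1) = rf x m * (x + m) := by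
  simp [rf, ascPochhammer_succ_eval]
lemma rf_add (x : ℝ) (m k : ℕ) : rf x (m + k) = rf x m * rf (x + m) k := by
  have := congrArg (Polynomial.eval x) (ascPochhammer_mul ℝ m k)
  simpa [rf, Polynomial.eval_comp] using this.symm
lemma rf_pos (x : ℝ) (hx : 0 < x) (m : ℕ) : 0 < rf x m := ascPochhammer_pos m x hx

lemma vand (a b : ℝ) (n : ℕ) :
    ∑ i ∈ range (n+1), (n.choose i : ℝ) * rf b i * rf a (n-i) = rf (a+b) n := by
  induction n with
  | zero => simp [rf_zero]
  | succ n ih =>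
    rw [Finset.sum_range_succ']
    have key : ∀ j ∈ range (n+1),
        ((n+1).choose (j+1) : ℝ) * rf b (j+1) * rf a (n+1-(j+1))
        = ((n.choose j : ℝ) * rf b j * rf a (n-j)) * (a+b+n)
          + ((n.choose (j+1) : ℝ) * rf b (j+1) * rf a (n+1-(j+1))
             - (n.choose j : ℝ) * rf b j * rf a (n+1-j)) := by
      intro j hj
      have hj' : j ≤ n := Nat.lt_succ_iff.mp (mem_range.mp hj)
      have e1 : n+1-(j+1) = n - j := by omega
      have e2 : n+1-j = (n-j)+1 := by omega
      have e3 : ((n-j:ℕ):ℝ) = (n:ℝ) - j := by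
        rw [Nat.cast_sub hj']
      rw [e1, e2, rf_succ a (n-j), Nat.choose_succ_succ, rf_succ b j, e3]
      push_cast
      ring
    rw [Finset.sum_congr rfl key, Finset.sum_add_distrib,
      Finset.sum_range_sub (fun j => (n.choose j : ℝ) * rf b j * rf a (n+1-j)),
      ← Finset.sum_mul, ih]
    have e0 : ((n.choose (n+1):ℝ)) * rf b (n+1) * rf a (n+1-(n+1)) = 0 := by
      simp [Nat.choose_succ_self]
    have e1 : ((n.choose 0:ℝ)) * rf b 0 * rf a (n+1-0) = rf a (n+1) := by
      simp [rf_zero]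
    have e2 : (((n+1).choose 0:ℝ)) * rf b 0 * rf a (n+1-0) = rf a (n+1) := by
      simp [rf_zero]
    rw [e0, e1, e2, rf_succ (a+b) n]
    push_cast
    ring

lemma Lrec (a b : ℝ) (n : ℕ) :
    ∑ j ∈ range (n+1), ((n+1).choose (j+1) : ℝ) * rf b j * rf a (n-j)
    = (a+b+n-1) * ∑ j ∈ range n, (n.choose (j+1) : ℝ) * rf b j * rf a (n-(j+1)) + rf a n := by
  have split : ∀ j ∈ range (n+1),
      ((n+1).choose (j+1) : ℝ) * rf b j * rf a (n-j)
      = (n.choose (j+1) : ℝ) * rf b j * rf a (n-j)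
        + (n.choose j : ℝ) * rf b j * rf a (n-j) := by
    intro j hj
    rw [Nat.choose_succ_succ]
    push_cast
    ring
  rw [Finset.sum_congr rfl split, Finset.sum_add_distrib, vand a b n]
  -- first sum: ∑_{j ∈ range (n+1)} C(n,j+1) rf b j rf a (n-j)
  have first : ∑ j ∈ range (n+1), (n.choose (j+1) : ℝ) * rf b j * rf a (n-j)
      = (a+b+n-1) * ∑ j ∈ range n, (n.choose (j+1) : ℝ) * rf b j * rf a (n-(j+1))
        - (rf (a+b) n - rf a n) := by
    rw [Finset.sum_range_succ]
    simp only [Nat.choose_succ_self, Nat.cast_zero, zero_mul, add_zero]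
    have step : ∀ j ∈ range n,
        (n.choose (j+1) : ℝ) * rf b j * rf a (n-j)
        = ((n.choose (j+1) : ℝ) * rf b j * rf a (n-(j+1))) * (a+b+n-1)
          - (n.choose (j+1) : ℝ) * rf b (j+1) * rf a (n-(j+1)) := by
      intro j hj
      have hj' : j < n := mem_range.mp hj
      have e1 : n - j = (n-(j+1)) + 1 := by omega
      have e3 : ((n-(j+1):ℕ):ℝ) = (n:ℝ) - j - 1 := by
        rw [Nat.cast_sub hj']; push_cast; ring
      rw [e1, rf_succ a, rf_succ b, e3]
      ring
    rw [Finset.sum_congr rfl step, Finset.sum_sub_distrib, ← Finset.sum_mul]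
    have second : ∑ j ∈ range n, (n.choose (j+1) : ℝ) * rf b (j+1) * rf a (n-(j+1))
        = rf (a+b) n - rf a n := by
      have := vand a b n
      rw [Finset.sum_range_succ'] at this
      have h0 : ((n.choose 0 : ℝ)) * rf b 0 * rf a (n-0) = rf a n := by
        simp [rf_zero]
      rw [h0] at this
      linarith [this]
    rw [second]
    ring
  rw [first]
  ring

lemma Rrec (a b : ℝ) (n : ℕ) :
    ∑ j ∈ range (n+1), rf a j * rf (a+b+j) (n-j)
    = (a+b+n-1) * ∑ j ∈ range n, rf a j * rf (a+b+j) (n-(j+1)) + rf a n := by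
  rw [Finset.sum_range_succ]
  have last : rf a n * rf (a+b+n) (n-n) = rf a n := by
    simp [rf_zero]
  rw [last]
  congr 1
  have step : ∀ j ∈ range n,
      rf a j * rf (a+b+j) (n-j)
      = (rf a j * rf (a+b+j) (n-(j+1))) * (a+b+n-1) := by
    intro j hj
    have hj' : j < n := mem_range.mp hj
    have e1 : n - j = (n-(j+1)) + 1 := by omega
    have e3 : ((n-(j+1):ℕ):ℝ) = (n:ℝ) - j - 1 := by
      rw [Nat.cast_sub hj']; push_cast; ring
    rw [e1, rf_succ, e3]
    ring
  rw [Finset.sum_congr rfl step, ← Finset.sum_mul]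
  ring

lemma key (a b : ℝ) (n : ℕ) :
    ∑ j ∈ range n, (n.choose (j+1) : ℝ) * rf b j * rf a (n-(j+1))
    = ∑ j ∈ range n, rf a j * rf (a+b+j) (n-(j+1)) := by
  induction n with
  | zero => simp
  | succ n ih =>
    have hL : ∀ j ∈ range (n+1),
        ((n+1).choose (j+1) : ℝ) * rf b j * rf a (n+1-(j+1))
        = ((n+1).choose (j+1) : ℝ) * rf b j * rf a (n-j) := by
      intro j hj; congr 2; omega
    have hR : ∀ j ∈ range (n+1),
        rf a j * rf (a+b+j) (n+1-(j+1)) = rf a j * rf (a+b+j) (n-j) := by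
      intro j hj; congr 2; omega
    rw [Finset.sum_congr rfl hL, Finset.sum_congr rfl hR, Lrec, Rrec, ih]

theorem stmt1 (α θ : ℝ) (h0 : 0 ≤ α) (h1 : α < 1) (hθ : -α < θ) (hθ0 : α = 0 → 0 < θ)
    (n : ℕ) (hn : 1 ≤ n) :
    ∑ i ∈ Finset.Icc 1 n, (n.choose i : ℝ) * rf (1 - α) (i - 1) * rf (θ + α) (n - i)
      = rf (θ + 1) (n - 1) * ∑ i ∈ Finset.Icc 1 n, rf (θ + α) (i - 1) / rf (θ + 1) (i - 1) := by
  set a := θ + α with ha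
  set b := 1 - α with hb
  have hpos : 0 < θ + 1 := by linarith
  have hab : θ + 1 = a + b := by rw [ha, hb]; ring
  -- rewrite LHS
  have hLHS : ∑ i ∈ Finset.Icc 1 n, (n.choose i : ℝ) * rf b (i - 1) * rf a (n - i)
      = ∑ j ∈ range n, (n.choose (j+1) : ℝ) * rf b j * rf a (n-(j+1)) := by
    rw [← Finset.Ico_add_one_right_eq_Icc, Finset.sum_Ico_eq_sum_range]
    have : n + 1 - 1 = n := by omega
    rw [this]
    refine Finset.sum_congr rfl fun j hj => ?_
    have e1 : 1 + j - 1 = j := by omega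
    have e2 : n - (1 + j) = n - (j+1) := by omega
    have e3 : (1 + j).choose (1 + j) = 1 := Nat.choose_self _
    rw [e1, e2, show (1:ℕ) + j = j + 1 by omega]
  -- rewrite RHS
  have hRHS : rf (θ + 1) (n - 1) * ∑ i ∈ Finset.Icc 1 n, rf a (i - 1) / rf (θ + 1) (i - 1)
      = ∑ j ∈ range n, rf a j * rf (a+b+j) (n-(j+1)) := by
    rw [Finset.mul_sum]
    rw [← Finset.Ico_add_one_right_eq_Icc, Finset.sum_Ico_eq_sum_range]
    have hn1 : n + 1 - 1 = n := by omega
    rw [hn1]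
    refine Finset.sum_congr rfl fun j hj => ?_
    have hj' : j < n := mem_range.mp hj
    have e1 : 1 + j - 1 = j := by omega
    rw [e1]
    have hsplit : rf (θ + 1) (n - 1) = rf (θ+1) j * rf (θ+1+j) (n-(j+1)) := by
      have : n - 1 = j + (n - (j+1)) := by omega
      rw [this, rf_add]
    have hne : rf (θ+1) j ≠ 0 := ne_of_gt (rf_pos _ hpos _)
    rw [hsplit]
    have habj : θ + 1 + (j:ℝ) = a + b + j := by rw [hab]
    rw [habj]
    field_simp
  rw [hLHS, hRHS, key]
end

section
/- Let 0 < α < 1 and θ > -α. Define g_n(θ,α) = ∑_{i=1}^n (θ+α)_{i-1}/(θ+1)_{i-1}. Then g_n(θ,α)/n^α converges, as n → ∞, to Γ(θ+1)/(α·Γ(θ+α)). -/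
open Finset Real Filter

open Topology Asymptotics

/-!
By Euler's limit formula for `Γ`, the ratio of Pochhammer symbols `(θ+α)_j / (θ+1)_j` behaves like
`C j^(α-1)` with `C = Γ(θ+1)/Γ(θ+α)`, and so does `C/α · ((j+1)^α - j^α)`, whose partial sums
telescope to `n^α`. The Stolz–Cesàro theorem then transfers the ratio of the terms to the ratio of
the partial sums.
-/

theorem tendsto_sum_range_div_sum_range {a b : ℕ → ℝ} {L : ℝ} (hb : ∀ i, 0 < b i)
    (hb_sum : Tendsto (fun n => ∑ i ∈ range n, b i) atTop atTop)
    (hab : Tendsto (fun i => a i / b i) atTop (𝓝 L)) :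
    Tendsto (fun n => (∑ i ∈ range n, a i) / ∑ i ∈ range n, b i) atTop (𝓝 L) := by
  have hsmall : (fun i => a i - L * b i) =o[atTop] b := by
    rw [isLittleO_iff_tendsto fun i hi => absurd hi (hb i).ne']
    refine (sub_self L ▸ hab.sub_const L).congr fun i => ?_
    field_simp [(hb i).ne']
  have hsum := (hsmall.sum_range (fun i => (hb i).le) hb_sum).tendsto_div_nhds_zero
  refine (zero_add L ▸ hsum.add_const L).congr' ?_
  filter_upwards [hb_sum.eventually_gt_atTop 0] with n hn
  rw [sum_sub_distrib, ← mul_sum]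
  field_simp
  ring

theorem sum_range_rpow_succ_sub_rpow {p : ℝ} (hp : p ≠ 0) (n : ℕ) :
    ∑ i ∈ range n, (((i : ℝ) + 1) ^ p - (i : ℝ) ^ p) = (n : ℝ) ^ p := by
  simpa [zero_rpow hp] using sum_range_sub (fun i : ℕ => (i : ℝ) ^ p) n

-- The slope of `t ↦ t ^ p` at `1`, sampled at `t = 1 / n`.
theorem tendsto_rpow_succ_sub_rpow_mul_rpow (p : ℝ) :
    Tendsto (fun n : ℕ => (((n : ℝ) + 1) ^ p - (n : ℝ) ^ p) * (n : ℝ) ^ (1 - p)) atTop (𝓝 p) := by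
  have hslope : Tendsto (fun t : ℝ => t⁻¹ * ((1 + t) ^ p - 1)) (𝓝[≠] 0) (𝓝 p) := by
    simpa using (hasDerivAt_rpow_const (x := 1) (p := p) (Or.inl one_ne_zero)).tendsto_slope_zero
  have hinv : Tendsto (fun n : ℕ => (n : ℝ)⁻¹) atTop (𝓝[≠] 0) :=
    (tendsto_inv_atTop_nhdsGT_zero.comp tendsto_natCast_atTop_atTop).mono_right
      (nhdsGT_le_nhdsNE 0)
  refine (hslope.comp hinv).congr' ?_
  filter_upwards [eventually_gt_atTop 0] with n hn
  have hn' : (0 : ℝ) < n := by exact_mod_cast hn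
  have hsplit : (n : ℝ) + 1 = n * (1 + (n : ℝ)⁻¹) := by field_simp
  have hpow : (n : ℝ) ^ p * (n : ℝ) ^ (1 - p) = n := by
    rw [← rpow_add hn', add_sub_cancel, rpow_one]
  rw [Function.comp_apply, inv_inv, hsplit, mul_rpow hn'.le (by positivity)]
  linear_combination (1 - (1 + (n : ℝ)⁻¹) ^ p) * hpow

theorem ascPochhammer_eval_eq_prod_range {R : Type*} [CommSemiring R] (n : ℕ) (r : R) :
    (ascPochhammer R n).eval r = ∏ j ∈ range n, (r + j) := by
  induction n with
  | zero => simp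
  | succ n ih => simp [ascPochhammer_succ_right, ih, ← Finset.prod_range_succ]

theorem Real.GammaSeq_eq_div_rf (s : ℝ) (n : ℕ) :
    GammaSeq s n = (n : ℝ) ^ s * n.factorial / rf s (n + 1) := by
  rw [GammaSeq, rf, ascPochhammer_eval_eq_prod_range]

-- `GammaSeq s n` divides by `rf s (n + 1) = rf s n * (s + n)`, whence the correcting factor
-- `(y + n) / (x + n)`.
theorem tendsto_rf_div_rf_mul_rpow {x y : ℝ} (hx : 0 < x) (hy : 0 < y) :
    Tendsto (fun n : ℕ => rf x n / rf y n * (n : ℝ) ^ (y - x)) atTop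
      (𝓝 (Gamma y / Gamma x)) := by
  have hGammaSeq : Tendsto (fun n => GammaSeq y n / GammaSeq x n) atTop (𝓝 (Gamma y / Gamma x)) :=
    (GammaSeq_tendsto_Gamma y).div (GammaSeq_tendsto_Gamma x) (Gamma_pos_of_pos hx).ne'
  have hfactor : Tendsto (fun n : ℕ => (y + n) / (x + n)) atTop (𝓝 1) := by
    have hx' : ∀ n : ℕ, 0 < x + n := fun n => by positivity
    have hdiff : Tendsto (fun n : ℕ => 1 + (y - x) / (x + n)) atTop (𝓝 (1 + 0)) :=
      tendsto_const_nhds.add <| tendsto_const_nhds.div_atTop <|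
        tendsto_atTop_add_const_left _ x tendsto_natCast_atTop_atTop
    refine (add_zero (1 : ℝ) ▸ hdiff).congr fun n => ?_
    field_simp [(hx' n).ne']
    ring
  refine (mul_one (Gamma y / Gamma x) ▸ hGammaSeq.mul hfactor).congr' ?_
  filter_upwards [eventually_gt_atTop 0] with n hn
  have hn' : (0 : ℝ) < n := by exact_mod_cast hn
  have hrx : 0 < rf x n := ascPochhammer_pos n x hx
  have hry : 0 < rf y n := ascPochhammer_pos n y hy
  have hpow : (n : ℝ) ^ y = (n : ℝ) ^ (y - x) * (n : ℝ) ^ x := by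
    rw [← rpow_add hn']; ring_nf
  simp only [GammaSeq_eq_div_rf, rf, ascPochhammer_succ_eval, hpow]
  have hnx : 0 < (n : ℝ) ^ x := rpow_pos_of_pos hn' x
  have hnyx : 0 < (n : ℝ) ^ (y - x) := rpow_pos_of_pos hn' (y - x)
  have hfac : (0 : ℝ) < n.factorial := by positivity
  field_simp

theorem sum_Icc_one_sub_one_eq_sum_range {M : Type*} [AddCommMonoid M] (f : ℕ → M) (n : ℕ) :
    ∑ i ∈ Icc 1 n, f (i - 1) = ∑ i ∈ range n, f i := by
  rw [← Ico_add_one_right_eq_Icc, sum_Ico_eq_sum_range]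
  simp

theorem stmt5 (α θ : ℝ) (h0 : 0 < α) (h1 : α < 1) (hθ : -α < θ) :
    Filter.Tendsto
      (fun n : ℕ => (∑ i ∈ Finset.Icc 1 n, rf (θ + α) (i - 1) / rf (θ + 1) (i - 1)) / (n : ℝ) ^ α)
      Filter.atTop (nhds (Real.Gamma (θ + 1) / (α * Real.Gamma (θ + α)))) := by
  set b : ℕ → ℝ := fun j => ((j : ℝ) + 1) ^ α - (j : ℝ) ^ α
  have hb : ∀ j, 0 < b j := fun j =>
    sub_pos.2 (rpow_lt_rpow (Nat.cast_nonneg j) (lt_add_one _) h0)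
  have hb_sum : ∀ n, ∑ j ∈ range n, b j = (n : ℝ) ^ α := sum_range_rpow_succ_sub_rpow h0.ne'
  have hratio : Tendsto (fun j => rf (θ + α) j / rf (θ + 1) j / b j) atTop
      (𝓝 (Gamma (θ + 1) / (α * Gamma (θ + α)))) := by
    have hrf := tendsto_rf_div_rf_mul_rpow (x := θ + α) (y := θ + 1) (by linarith) (by linarith)
    rw [show θ + 1 - (θ + α) = 1 - α by ring] at hrf
    rw [mul_comm, ← div_div]
    refine (hrf.div (tendsto_rpow_succ_sub_rpow_mul_rpow α) h0.ne').congr' ?_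
    filter_upwards [eventually_gt_atTop 0] with n hn
    exact mul_div_mul_right _ _ (rpow_pos_of_pos (by exact_mod_cast hn) _).ne'
  have hb_top : Tendsto (fun n => ∑ j ∈ range n, b j) atTop atTop := by
    simp only [hb_sum]
    exact (tendsto_rpow_atTop h0).comp tendsto_natCast_atTop_atTop
  simpa only [sum_Icc_one_sub_one_eq_sum_range (fun i => rf (θ + α) i / rf (θ + 1) i), hb_sum]
    using tendsto_sum_range_div_sum_range hb hb_top hratio
end
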